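/- arXiv:0912.0284 — 5 statements merged into one kernel-verified Lean document; each statement's English description precedes it below -/
import Mathlib

section
/- The composition δ_ℓ ∘ δ_{ℓ-1} = 0, i.e. the coboundary operator δ defined using the kernel K satisfies δ² = 0, making (L²(X^{ℓ+1}), δ) a cochain complex. -/
open MeasureTheory

/-- The Alexander–Spanier coboundary operator with kernel weights
`∏_{j≠i} √K(xᵢ,xⱼ)`. -/
noncomputable def coboundary {X : Type*} (K : X → X → ℝ) (n : ℕ)
    (f : (Fin n → X) → ℝ) : (Fin (n + 1) → X) → ℝ :=
  fun x => ∑ i : Fin (n + 1),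
    (-1 : ℝ) ^ (i : ℕ) *
      (∏ j ∈ Finset.univ.erase i, Real.sqrt (K (x i) (x j))) *
        f (x ∘ i.succAbove)

section Aux

variable {X : Type*} (K : X → X → ℝ) (n : ℕ) (f : (Fin n → X) → ℝ) (x : Fin (n + 2) → X)

/-- One term of the expanded double coboundary. -/
noncomputable def Tterm (i : Fin (n + 2)) (k : Fin (n + 1)) : ℝ :=
  (-1 : ℝ) ^ (i : ℕ) *
      (∏ j ∈ Finset.univ.erase i, Real.sqrt (K (x i) (x j))) *
    ((-1 : ℝ) ^ (k : ℕ) *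
        (∏ j ∈ Finset.univ.erase k,
          Real.sqrt (K (x (i.succAbove k)) (x (i.succAbove j)))) *
      f (x ∘ i.succAbove ∘ k.succAbove))

lemma prod_erase_eq_succAbove {m : ℕ} (g : Fin (m + 1) → ℝ) (i : Fin (m + 1)) :
    ∏ j ∈ Finset.univ.erase i, g j = ∏ t : Fin m, g (i.succAbove t) := by
  rw [show (Finset.univ.erase i) = Finset.univ.image i.succAbove by
      rw [Fin.image_succAbove_univ, Finset.compl_singleton],
    Finset.prod_image (fun a _ b _ h => Fin.succAbove_right_injective h)]

lemma Tterm_normal (i : Fin (n + 2)) (k : Fin (n + 1)) :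
    Tterm K n f x i k =
      (-1 : ℝ) ^ ((i : ℕ) + (k : ℕ)) *
        (Real.sqrt (K (x i) (x (i.succAbove k))) *
          ((∏ s : Fin n,
            (Real.sqrt (K (x i) (x (i.succAbove (k.succAbove s)))) *
              Real.sqrt (K (x (i.succAbove k)) (x (i.succAbove (k.succAbove s)))))) *
          f (x ∘ i.succAbove ∘ k.succAbove))) := by
  unfold Tterm
  rw [prod_erase_eq_succAbove (fun j => Real.sqrt (K (x i) (x j))) i,
    prod_erase_eq_succAbove (fun j => Real.sqrt (K (x (i.succAbove k)) (x (i.succAbove j)))) k,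
    Fin.prod_univ_succAbove (fun t => Real.sqrt (K (x i) (x (i.succAbove t)))) k,
    Finset.prod_mul_distrib, pow_add]
  ring

lemma comp_succAbove (i : Fin (n + 2)) (k : Fin (n + 1)) (h : (i : ℕ) ≤ (k : ℕ)) (s : Fin n) :
    i.succAbove (k.succAbove s) =
      (k.succ).succAbove ((⟨(i : ℕ), by omega⟩ : Fin (n + 1)).succAbove s) := by
  apply Fin.ext
  simp only [Fin.succAbove, Fin.lt_def, Fin.coe_castSucc, Fin.val_succ]
  split_ifs <;> simp_all [Fin.lt_def] <;> omega

lemma succAbove_partner (i : Fin (n + 2)) (k : Fin (n + 1)) (h : (i : ℕ) ≤ (k : ℕ)) :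
    (k.succ).succAbove (⟨(i : ℕ), by omega⟩ : Fin (n + 1)) = i := by
  apply Fin.ext
  simp only [Fin.succAbove, Fin.lt_def, Fin.coe_castSucc, Fin.val_succ]
  split_ifs <;> simp_all <;> omega

lemma Tterm_cancel (hKsymm : ∀ a b, K a b = K b a)
    (i : Fin (n + 2)) (k : Fin (n + 1)) (h : (i : ℕ) ≤ (k : ℕ)) :
    Tterm K n f x i k + Tterm K n f x (k.succ) (⟨(i : ℕ), by omega⟩ : Fin (n + 1)) = 0 := by
  rw [Tterm_normal, Tterm_normal]
  have h1 : (k.succ).succAbove (⟨(i : ℕ), by omega⟩ : Fin (n + 1)) = i :=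
    succAbove_partner n i k h
  have h5 : i.succAbove k = k.succ := by
    apply Fin.ext
    simp only [Fin.succAbove, Fin.lt_def, Fin.coe_castSucc, Fin.val_succ]
    split_ifs <;> simp only [Fin.coe_castSucc, Fin.val_succ] <;> omega
  have h3 : x ∘ (k.succ).succAbove ∘ (⟨(i : ℕ), by omega⟩ : Fin (n + 1)).succAbove
      = x ∘ i.succAbove ∘ k.succAbove := by
    funext s
    exact congrArg x ((comp_succAbove n i k h s).symm)
  have h4 : ∀ s : Fin n, (k.succ).succAbove ((⟨(i : ℕ), by omega⟩ : Fin (n + 1)).succAbove s)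
      = i.succAbove (k.succAbove s) := fun s => (comp_succAbove n i k h s).symm
  simp only [h1, h4, h3, h5, Fin.val_succ]
  rw [hKsymm (x (k.succ)) (x i)]
  rw [show (∏ s : Fin n,
      (Real.sqrt (K (x (k.succ)) (x (i.succAbove (k.succAbove s)))) *
        Real.sqrt (K (x i) (x (i.succAbove (k.succAbove s)))))) =
    (∏ s : Fin n,
      (Real.sqrt (K (x i) (x (i.succAbove (k.succAbove s)))) *
        Real.sqrt (K (x (k.succ)) (x (i.succAbove (k.succAbove s)))))) from
    Finset.prod_congr rfl (fun s _ => mul_comm _ _)]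
  rw [show (k : ℕ) + 1 + (i : ℕ) = ((i : ℕ) + (k : ℕ)) + 1 by omega, pow_succ]
  ring

/-- The cancelling involution on index pairs. -/
def invo (p : Fin (n + 2) × Fin (n + 1)) : Fin (n + 2) × Fin (n + 1) :=
  if h : (p.2 : ℕ) < (p.1 : ℕ) then
    (p.2.castSucc, ⟨(p.1 : ℕ) - 1, by have := p.1.isLt; omega⟩)
  else
    (p.2.succ, ⟨(p.1 : ℕ), by have := p.2.isLt; omega⟩)

lemma invo_eq_of_lt {i : Fin (n + 2)} {k : Fin (n + 1)} (h : (k : ℕ) < (i : ℕ))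
    (hpf : (i : ℕ) - 1 < n + 1) : invo n (i, k) = (k.castSucc, ⟨(i : ℕ) - 1, hpf⟩) :=
  dif_pos h

lemma invo_eq_of_ge {i : Fin (n + 2)} {k : Fin (n + 1)} (h : ¬ (k : ℕ) < (i : ℕ))
    (hpf : (i : ℕ) < n + 1) : invo n (i, k) = (k.succ, ⟨(i : ℕ), hpf⟩) :=
  dif_neg h

lemma invo_invo (p : Fin (n + 2) × Fin (n + 1)) : invo n (invo n p) = p := by
  obtain ⟨i, k⟩ := p
  by_cases h : (k : ℕ) < (i : ℕ)
  · rw [invo_eq_of_lt n h (by have := i.isLt; omega)]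
    rw [invo_eq_of_ge n (by simp only [Fin.coe_castSucc]; omega)
      (by simp only [Fin.coe_castSucc]; have := k.isLt; omega)]
    refine Prod.ext ?_ ?_ <;> apply Fin.ext <;>
      simp only [Fin.coe_castSucc, Fin.val_succ] <;> omega
  · rw [invo_eq_of_ge n h (by have := k.isLt; omega)]
    rw [invo_eq_of_lt n (by simp only [Fin.val_succ]; omega)
      (by simp only [Fin.val_succ]; have := k.isLt; omega)]
    refine Prod.ext ?_ ?_ <;> apply Fin.ext <;>
      simp only [Fin.coe_castSucc, Fin.val_succ] <;> omega

lemma invo_fst_ne (p : Fin (n + 2) × Fin (n + 1)) : (invo n p).1 ≠ p.1 := by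
  obtain ⟨i, k⟩ := p
  by_cases h : (k : ℕ) < (i : ℕ)
  · rw [invo_eq_of_lt n h (by have := i.isLt; omega)]
    intro hc
    have := congrArg Fin.val hc
    simp only [Fin.coe_castSucc] at this
    omega
  · rw [invo_eq_of_ge n h (by have := k.isLt; omega)]
    intro hc
    have := congrArg Fin.val hc
    simp only [Fin.val_succ] at this
    omega

lemma Tterm_cancel' (hKsymm : ∀ a b, K a b = K b a)
    (i : Fin (n + 2)) (k : Fin (n + 1)) (i' : Fin (n + 2)) (j : Fin (n + 1))
    (h : (i : ℕ) ≤ (k : ℕ)) (hi' : (i' : ℕ) = (k : ℕ) + 1) (hj : (j : ℕ) = (i : ℕ)) :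
    Tterm K n f x i k + Tterm K n f x i' j = 0 := by
  obtain rfl : i' = k.succ := Fin.ext (by simp only [Fin.val_succ]; omega)
  obtain rfl : j = (⟨(i : ℕ), Nat.lt_of_le_of_lt h k.isLt⟩ : Fin (n + 1)) := Fin.ext (by simpa using hj)
  exact Tterm_cancel K n f x hKsymm i k h

lemma invo_cancel (hKsymm : ∀ a b, K a b = K b a) (p : Fin (n + 2) × Fin (n + 1)) :
    Tterm K n f x p.1 p.2 + Tterm K n f x (invo n p).1 (invo n p).2 = 0 := by
  obtain ⟨i, k⟩ := p
  by_cases h : (k : ℕ) < (i : ℕ)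
  · rw [invo_eq_of_lt n h (by have := i.isLt; omega)]
    rw [add_comm]
    exact Tterm_cancel' K n f x hKsymm (k.castSucc)
      (⟨(i : ℕ) - 1, by have := i.isLt; omega⟩ : Fin (n + 1)) i k
      (by simp only [Fin.coe_castSucc]; omega) (by simp only; omega)
      (by simp only [Fin.coe_castSucc])
  · rw [invo_eq_of_ge n h (by have := k.isLt; omega)]
    exact Tterm_cancel' K n f x hKsymm i k (k.succ)
      (⟨(i : ℕ), by have := k.isLt; omega⟩ : Fin (n + 1))
      (by omega) (by simp only [Fin.val_succ]) (by simp only)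

end Aux

/-- `δ_ℓ ∘ δ_{ℓ-1} = 0`, i.e. the coboundary defined with a
non-negative, measurable, symmetric, bounded kernel `K` satisfies `δ² = 0`,
so that `(L²(X^{ℓ+1}), δ)` is a cochain complex. -/
theorem coboundary_coboundary_eq_zero
    {X : Type*} [MeasurableSpace X] (μ : Measure X) [IsProbabilityMeasure μ]
    (K : X → X → ℝ) (hKmeas : Measurable (Function.uncurry K))
    (hKnonneg : ∀ x y, 0 ≤ K x y) (hKsymm : ∀ x y, K x y = K y x)
    (C : ℝ) (hKC : ∀ x y, K x y ≤ C) (n : ℕ)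
    (f : (Fin n → X) → ℝ) (x : Fin (n + 2) → X) :
    coboundary K (n + 1) (coboundary K n f) x = 0 := by
  have expand : coboundary K (n + 1) (coboundary K n f) x
      = ∑ p : Fin (n + 2) × Fin (n + 1), Tterm K n f x p.1 p.2 := by
    rw [← Finset.univ_product_univ, Finset.sum_product]
    unfold coboundary Tterm
    simp only [Finset.mul_sum]
    rfl
  rw [expand]
  exact Finset.sum_ninvolution (invo n)
    (fun p => invo_cancel K n f x hKsymm p)
    (fun p _ => fun hc => invo_fst_ne n p (congrArg Prod.fst hc))
    (fun p => Finset.mem_univ _)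
    (fun p => invo_invo n p)
end

section
/- The operator ∂_ℓ defined by ∂_ℓ g(x₀,…,x_{ℓ-1}) = Σᵢ (-1)ⁱ ∫_X (∏_j √K(t,x_j)) g(x₀,…,x_{i-1},t,xᵢ,…,x_{ℓ-1}) dμ(t) is the adjoint of δ_{ℓ-1}: for all f ∈ L²(X^ℓ) and g ∈ L²(X^{ℓ+1}), ⟨δ_{ℓ-1}f, g⟩ = ⟨f, ∂_ℓ g⟩. -/
open MeasureTheory

/-- The boundary operator
`∂_ℓ g(x₀,…,x_{ℓ-1}) = Σᵢ (-1)ⁱ ∫_X (∏_j √K(t,x_j)) g(x₀,…,x_{i-1},t,xᵢ,…,x_{ℓ-1}) dμ(t)`. -/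
noncomputable def kboundary {X : Type*} [MeasurableSpace X] (μ : Measure X)
    (K : X → X → ℝ) (n : ℕ) (g : (Fin (n + 1) → X) → ℝ) : (Fin n → X) → ℝ :=
  fun x => ∑ i : Fin (n + 1),
    (-1 : ℝ) ^ (i : ℕ) *
      ∫ t, (∏ j, Real.sqrt (K t (x j))) * g (i.insertNth t x) ∂μ

/-! Fix a face index `i`. The map `(t, y) ↦ Fin.insertNth i t y` carries `μ ⊗ μⁿ` to `μⁿ⁺¹`,
and along it the `i`-th summand of `δf · g` becomes `f y · (∏ⱼ √K(t, yⱼ)) · g(insertNth i t y)`.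
Integrating first in `t` (Fubini) gives the `i`-th summand of `f · ∂g`. Fubini applies because
`f ∘ snd` and `g ∘ insertNth i` are both in `L²(μ ⊗ μⁿ)` when `μ` is finite, and the weight is
bounded by `√C ^ n`. -/

theorem Fin.prod_erase_eq_prod_succAbove {M : Type*} [CommMonoid M] {n : ℕ} (i : Fin (n + 1))
    (h : Fin (n + 1) → M) : ∏ j ∈ Finset.univ.erase i, h j = ∏ j : Fin n, h (i.succAbove j) := by
  rw [Fin.univ_succAbove n i, Finset.erase_cons, Finset.prod_map]
  rfl

section KernelWeight

variable {X : Type*} {K : X → X → ℝ}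

theorem abs_prod_sqrt_le_pow {ι : Type*} [Fintype ι] {C : ℝ} (hKC : ∀ x y, K x y ≤ C) (t : X)
    (y : ι → X) : |∏ j, Real.sqrt (K t (y j))| ≤ Real.sqrt C ^ Fintype.card ι := by
  rw [Finset.abs_prod, ← Finset.card_univ, ← Finset.prod_const]
  refine Finset.prod_le_prod (fun j _ => abs_nonneg _) fun j _ => ?_
  rw [abs_of_nonneg (Real.sqrt_nonneg _)]
  exact Real.sqrt_le_sqrt (hKC t (y j))

theorem measurable_prod_sqrt [MeasurableSpace X] {ι : Type*} [Fintype ι]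
    (hKmeas : Measurable (Function.uncurry K)) :
    Measurable fun p : X × (ι → X) => ∏ j, Real.sqrt (K p.1 (p.2 j)) :=
  Finset.measurable_prod _ fun j _ =>
    (hKmeas.comp (measurable_fst.prodMk ((measurable_pi_apply j).comp measurable_snd))).sqrt

theorem coboundary_summand_insertNth {n : ℕ} {f : (Fin n → X) → ℝ} {g : (Fin (n + 1) → X) → ℝ}
    (i : Fin (n + 1)) (t : X) (y : Fin n → X) :
    (fun x : Fin (n + 1) → X =>
        (∏ j ∈ Finset.univ.erase i, Real.sqrt (K (x i) (x j))) * f (x ∘ i.succAbove) * g x)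
      (i.insertNth t y) =
      f y * ((∏ j, Real.sqrt (K t (y j))) * g (i.insertNth t y)) := by
  simp only [Fin.prod_erase_eq_prod_succAbove, Fin.insertNth_comp_succAbove,
    Fin.insertNth_apply_same, Fin.insertNth_apply_succAbove]
  ring

end KernelWeight

namespace MeasureTheory

variable {X : Type*} [MeasurableSpace X] {n : ℕ}

theorem measurePreserving_insertNth (μ : Measure X) [SigmaFinite μ] (i : Fin (n + 1)) :
    MeasurePreserving (fun p : X × (Fin n → X) => (i.insertNth p.1 p.2 : Fin (n + 1) → X))
      (μ.prod (Measure.pi fun _ => μ)) (Measure.pi fun _ => μ) :=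
  (measurePreserving_piFinSuccAbove (fun _ => μ) i).symm _

theorem measurableEmbedding_insertNth (i : Fin (n + 1)) :
    MeasurableEmbedding fun p : X × (Fin n → X) => (i.insertNth p.1 p.2 : Fin (n + 1) → X) :=
  (MeasurableEquiv.piFinSuccAbove (fun _ => X) i).symm.measurableEmbedding

variable (μ : Measure X) {K : X → X → ℝ} {f : (Fin n → X) → ℝ} {g : (Fin (n + 1) → X) → ℝ}
  (i : Fin (n + 1))

theorem integrable_kboundary_integrand [IsFiniteMeasure μ] {C : ℝ}
    (hKmeas : Measurable (Function.uncurry K)) (hKC : ∀ x y, K x y ≤ C)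
    (hf : MemLp f 2 (Measure.pi fun _ => μ)) (hg : MemLp g 2 (Measure.pi fun _ => μ)) :
    Integrable (fun p : X × (Fin n → X) =>
      f p.2 * ((∏ j, Real.sqrt (K p.1 (p.2 j))) * g (i.insertNth p.1 p.2)))
      (μ.prod (Measure.pi fun _ => μ)) := by
  have hfg : Integrable (fun p : X × (Fin n → X) => f p.2 * g (i.insertNth p.1 p.2))
      (μ.prod (Measure.pi fun _ => μ)) :=
    (hf.comp_snd μ).integrable_mul (hg.comp_measurePreserving (measurePreserving_insertNth μ i))
  refine (hfg.bdd_mul (measurable_prod_sqrt hKmeas).aestronglyMeasurable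
    (ae_of_all _ fun p => abs_prod_sqrt_le_pow hKC p.1 p.2)).congr (ae_of_all _ fun p => ?_)
  ring

variable [SigmaFinite μ]

theorem integrable_coboundary_summand
    (hH : Integrable (fun p : X × (Fin n → X) =>
      f p.2 * ((∏ j, Real.sqrt (K p.1 (p.2 j))) * g (i.insertNth p.1 p.2)))
      (μ.prod (Measure.pi fun _ => μ))) :
    Integrable (fun x => (∏ j ∈ Finset.univ.erase i, Real.sqrt (K (x i) (x j))) *
      f (x ∘ i.succAbove) * g x) (Measure.pi fun _ => μ) := by
  rw [← (measurePreserving_insertNth μ i).integrable_comp_emb (measurableEmbedding_insertNth i)]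
  exact hH.congr (ae_of_all _ fun p => (coboundary_summand_insertNth i p.1 p.2).symm)

theorem integrable_kboundary_summand
    (hH : Integrable (fun p : X × (Fin n → X) =>
      f p.2 * ((∏ j, Real.sqrt (K p.1 (p.2 j))) * g (i.insertNth p.1 p.2)))
      (μ.prod (Measure.pi fun _ => μ))) :
    Integrable (fun y => f y * ∫ t, (∏ j, Real.sqrt (K t (y j))) * g (i.insertNth t y) ∂μ)
      (Measure.pi fun _ => μ) := by
  simpa only [integral_const_mul] using hH.integral_prod_right

theorem integral_coboundary_summand
    (hH : Integrable (fun p : X × (Fin n → X) =>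
      f p.2 * ((∏ j, Real.sqrt (K p.1 (p.2 j))) * g (i.insertNth p.1 p.2)))
      (μ.prod (Measure.pi fun _ => μ))) :
    ∫ x, (∏ j ∈ Finset.univ.erase i, Real.sqrt (K (x i) (x j))) * f (x ∘ i.succAbove) * g x
        ∂(Measure.pi fun _ => μ) =
      ∫ y, f y * ∫ t, (∏ j, Real.sqrt (K t (y j))) * g (i.insertNth t y) ∂μ
        ∂(Measure.pi fun _ => μ) := by
  rw [← (measurePreserving_insertNth μ i).integral_comp (measurableEmbedding_insertNth i)]
  simp only [coboundary_summand_insertNth]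
  rw [integral_prod_symm _ hH]
  simp only [integral_const_mul]

end MeasureTheory

theorem kboundary_adjoint_coboundary_general
    {X : Type*} [MeasurableSpace X] (μ : Measure X) [IsProbabilityMeasure μ]
    (K : X → X → ℝ) (hKmeas : Measurable (Function.uncurry K))
    (C : ℝ) (hKC : ∀ x y, K x y ≤ C) (n : ℕ)
    (f : (Fin n → X) → ℝ) (g : (Fin (n + 1) → X) → ℝ)
    (hf : MemLp f 2 (Measure.pi fun _ : Fin n => μ))
    (hg : MemLp g 2 (Measure.pi fun _ : Fin (n + 1) => μ)) :
    ∫ x, coboundary K n f x * g x ∂(Measure.pi fun _ : Fin (n + 1) => μ) =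
      ∫ x, f x * kboundary μ K n g x ∂(Measure.pi fun _ : Fin n => μ) := by
  have hH (i : Fin (n + 1)) := integrable_kboundary_integrand μ i hKmeas hKC hf hg
  have hcob : ∀ x, coboundary K n f x * g x = ∑ i : Fin (n + 1), (-1 : ℝ) ^ (i : ℕ) *
      ((∏ j ∈ Finset.univ.erase i, Real.sqrt (K (x i) (x j))) * f (x ∘ i.succAbove) * g x) := by
    intro x
    simp only [coboundary, Finset.sum_mul, mul_assoc]
  have hkb : ∀ y, f y * kboundary μ K n g y = ∑ i : Fin (n + 1), (-1 : ℝ) ^ (i : ℕ) *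
      (f y * ∫ t, (∏ j, Real.sqrt (K t (y j))) * g (i.insertNth t y) ∂μ) := by
    intro y
    simp only [kboundary, Finset.mul_sum, mul_left_comm]
  simp_rw [hcob, hkb]
  rw [integral_finsetSum _ fun i _ => (integrable_coboundary_summand μ i (hH i)).const_mul _,
    integral_finsetSum _ fun i _ => (integrable_kboundary_summand μ i (hH i)).const_mul _]
  simp_rw [integral_const_mul, integral_coboundary_summand μ _ (hH _)]

/-- `∂_ℓ` is the adjoint of `δ_{ℓ-1}`:
`⟨δ_{ℓ-1} f, g⟩_{L²(X^{ℓ+1})} = ⟨f, ∂_ℓ g⟩_{L²(X^ℓ)}`. -/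
theorem kboundary_adjoint_coboundary
    {X : Type*} [MeasurableSpace X] (μ : Measure X) [IsProbabilityMeasure μ]
    (K : X → X → ℝ) (hKmeas : Measurable (Function.uncurry K))
    (hKnonneg : ∀ x y, 0 ≤ K x y) (hKsymm : ∀ x y, K x y = K y x)
    (C : ℝ) (hKC : ∀ x y, K x y ≤ C) (n : ℕ)
    (f : (Fin n → X) → ℝ) (g : (Fin (n + 1) → X) → ℝ)
    (hf : MemLp f 2 (Measure.pi fun _ : Fin n => μ))
    (hg : MemLp g 2 (Measure.pi fun _ : Fin (n + 1) => μ)) :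
    ∫ x, coboundary K n f x * g x ∂(Measure.pi fun _ : Fin (n + 1) => μ) =
      ∫ x, f x * kboundary μ K n g x ∂(Measure.pi fun _ : Fin n => μ) :=
  kboundary_adjoint_coboundary_general μ K hKmeas C hKC n f g hf hg
end

section
/- For an alternating function f ∈ L²_a(X^{ℓ+1}) and K ≡ 1, the boundary operator has the simplified form ∂f(x₀,…,x_{ℓ-1}) = (ℓ+1) ∫_X f(t,x₀,…,x_{ℓ-1}) dμ(t), and the Laplacian satisfies Δf(x₀,…,x_ℓ) = (ℓ+2) f(x₀,…,x_ℓ) − (1/(ℓ+1)) Σᵢ ∂f(x₀,…,x̂ᵢ,…,x_ℓ). -/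
/-!
Alternation lets every coordinate be moved to the front: `f (insertNth i t z) = (-1)ⁱ f (t, z)`,
so the `ℓ + 1` terms of `∂f` coincide. The coboundary `δf` of an alternating `f` obeys the same
rule, whence `∂δf(x) = (ℓ + 2) ∫ δf(t, x) dμ(t)`; expanding `δf(t, x)` and integrating against the
probability measure gives `(ℓ + 2) (f x - (ℓ + 1)⁻¹ Σᵢ (-1)ⁱ ∂f(x₀,…,x̂ᵢ,…,x_ℓ))`, and adding
`δ∂f = Σᵢ (-1)ⁱ ∂f(x₀,…,x̂ᵢ,…,x_ℓ)` leaves the stated formula.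
-/

open MeasureTheory

/-- The Alexander–Spanier coboundary for the constant kernel `K ≡ 1`:
`δf(x₀,…,x_ℓ) = Σᵢ (-1)ⁱ f(x₀,…,x̂ᵢ,…,x_ℓ)`. -/
noncomputable def coboundary1 {X : Type*} (n : ℕ) (f : (Fin n → X) → ℝ) :
    (Fin (n + 1) → X) → ℝ :=
  fun x => ∑ i : Fin (n + 1), (-1 : ℝ) ^ (i : ℕ) * f (x ∘ i.succAbove)

/-- The boundary operator `∂ = δ*` for `K ≡ 1`. -/
noncomputable def boundary0 {X : Type*} [MeasurableSpace X] (μ : Measure X)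
    (n : ℕ) (g : (Fin (n + 1) → X) → ℝ) : (Fin n → X) → ℝ :=
  fun x => ∑ i : Fin (n + 1),
    (-1 : ℝ) ^ (i : ℕ) * ∫ t, g (i.insertNth t x) ∂μ

namespace Fin

theorem neg_one_pow_succAbove_mul_neg_one_pow_predAbove {R : Type*} [Monoid R] [HasDistribNeg R]
    {n : ℕ} (i : Fin (n + 2)) (k : Fin (n + 1)) :
    (-1 : R) ^ (i.succAbove k : ℕ) * (-1) ^ (k.predAbove i : ℕ) =
      -((-1) ^ (i : ℕ) * (-1) ^ (k : ℕ)) := by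
  rw [← pow_add, ← pow_add, ← neg_one_mul ((-1 : R) ^ ((i : ℕ) + k)), ← pow_succ']
  rcases lt_or_ge k.castSucc i with h | h
  · have hki : (k : ℕ) < i := h
    rw [succAbove_of_castSucc_lt _ _ h, predAbove_of_castSucc_lt _ _ h, val_castSucc,
      val_pred, show (i : ℕ) + k + 1 = k + (i - 1) + 2 by omega, pow_add _ _ 2, neg_one_sq,
      mul_one]
  · rw [succAbove_of_le_castSucc _ _ h, predAbove_of_le_castSucc _ _ h, val_succ, coe_castPred,
      show (k : ℕ) + 1 + i = i + k + 1 by omega]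

theorem insertNth_comp_succAbove_succAbove {α : Type*} {n : ℕ} (i : Fin (n + 2))
    (k : Fin (n + 1)) (t : α) (x : Fin (n + 1) → α) :
    i.insertNth t x ∘ (i.succAbove k).succAbove = (k.predAbove i).insertNth t (x ∘ k.succAbove) := by
  refine (insertNth_eq_iff.mpr ⟨?_, funext fun q => ?_⟩).symm
  · simp only [Function.comp_apply, succAbove_succAbove_predAbove, insertNth_apply_same]
  · simp only [removeNth, Function.comp_apply, succAbove_succAbove_succAbove_predAbove,
      insertNth_apply_succAbove]

end Fin

def IsAlternating {X : Type*} {n : ℕ} (f : (Fin n → X) → ℝ) : Prop :=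
  ∀ (σ : Equiv.Perm (Fin n)) (x : Fin n → X), f (x ∘ σ) = ((Equiv.Perm.sign σ : ℤ) : ℝ) * f x

section

variable {X : Type*} {m : ℕ}

theorem IsAlternating.apply_insertNth {f : (Fin (m + 1) → X) → ℝ} (hf : IsAlternating f)
    (i : Fin (m + 1)) (t : X) (z : Fin m → X) :
    f (i.insertNth t z) = (-1) ^ (i : ℕ) * f (Fin.cons t z) := by
  rw [← Fin.cons_comp_cycleRange, hf, Fin.sign_cycleRange]
  norm_num

theorem coboundary1_cons (f : (Fin (m + 1) → X) → ℝ) (t : X) (x : Fin (m + 1) → X) :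
    coboundary1 (m + 1) f (Fin.cons t x) =
      f x - ∑ k : Fin (m + 1), (-1) ^ (k : ℕ) * f (Fin.cons t (x ∘ k.succAbove)) := by
  rw [coboundary1, Fin.sum_univ_succ, Fin.succAbove_zero, Fin.cons_comp_succ, sub_eq_add_neg,
    ← Finset.sum_neg_distrib]
  simp only [Fin.val_zero, pow_zero, one_mul, Fin.cons_comp_succ_succAbove, Fin.val_succ,
    pow_succ, mul_neg_one, neg_mul]
  rfl

theorem IsAlternating.coboundary1_insertNth {f : (Fin (m + 1) → X) → ℝ} (hf : IsAlternating f)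
    (i : Fin (m + 2)) (t : X) (x : Fin (m + 1) → X) :
    coboundary1 (m + 1) f (i.insertNth t x) =
      (-1) ^ (i : ℕ) * coboundary1 (m + 1) f (Fin.cons t x) := by
  rw [coboundary1_cons, coboundary1, Fin.sum_univ_succAbove _ i, Fin.insertNth_comp_succAbove,
    mul_sub, Finset.mul_sum, sub_eq_add_neg, ← Finset.sum_neg_distrib]
  congr 1
  refine Finset.sum_congr rfl fun k _ => ?_
  rw [Fin.insertNth_comp_succAbove_succAbove, hf.apply_insertNth, ← mul_assoc,
    Fin.neg_one_pow_succAbove_mul_neg_one_pow_predAbove]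
  ring

variable [MeasurableSpace X] (μ : Measure X)

theorem boundary0_eq_of_apply_insertNth {g : (Fin (m + 1) → X) → ℝ}
    (hg : ∀ (i : Fin (m + 1)) (t : X) (z : Fin m → X),
      g (i.insertNth t z) = (-1) ^ (i : ℕ) * g (Fin.cons t z))
    (z : Fin m → X) :
    boundary0 μ m g z = (m + 1) * ∫ t, g (Fin.cons t z) ∂μ := by
  have hterm (i : Fin (m + 1)) :
      (-1) ^ (i : ℕ) * ∫ t, g (i.insertNth t z) ∂μ = ∫ t, g (Fin.cons t z) ∂μ := by
    simp only [hg, integral_const_mul, ← mul_assoc, ← pow_add, ← two_mul, pow_mul, neg_one_sq,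
      one_pow, one_mul]
  simp only [boundary0, hterm, Finset.sum_const, Finset.card_univ, Fintype.card_fin,
    nsmul_eq_mul, Nat.cast_add, Nat.cast_one]

theorem IsAlternating.boundary0_eq {f : (Fin (m + 1) → X) → ℝ} (hf : IsAlternating f)
    (z : Fin m → X) :
    boundary0 μ m f z = (m + 1) * ∫ t, f (Fin.cons t z) ∂μ :=
  boundary0_eq_of_apply_insertNth μ hf.apply_insertNth z

theorem IsAlternating.boundary0_coboundary1 [IsProbabilityMeasure μ]
    {f : (Fin (m + 1) → X) → ℝ} (hf : IsAlternating f)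
    (hInt : ∀ z : Fin m → X, Integrable (fun t => f (Fin.cons t z)) μ) (x : Fin (m + 1) → X) :
    boundary0 μ (m + 1) (coboundary1 (m + 1) f) x =
      (m + 2) * (f x -
        ∑ k : Fin (m + 1), (-1) ^ (k : ℕ) * ∫ t, f (Fin.cons t (x ∘ k.succAbove)) ∂μ) := by
  have hInt' (k : Fin (m + 1)) :
      Integrable (fun t => (-1) ^ (k : ℕ) * f (Fin.cons t (x ∘ k.succAbove))) μ :=
    (hInt _).const_mul _
  rw [boundary0_eq_of_apply_insertNth μ hf.coboundary1_insertNth]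
  simp only [coboundary1_cons]
  rw [integral_sub (integrable_const _) (integrable_finsetSum _ fun k _ => hInt' k),
    integral_const, integral_finsetSum _ fun k _ => hInt' k]
  simp only [probReal_univ, one_smul, integral_const_mul]
  push_cast
  ring

end

theorem boundary_and_laplacian_on_alternating_general
    {X : Type*} [MeasurableSpace X] (μ : Measure X) [IsProbabilityMeasure μ]
    (n : ℕ) (f : (Fin (n + 2) → X) → ℝ)
    (halt : ∀ (σ : Equiv.Perm (Fin (n + 2))) (x : Fin (n + 2) → X),
      f (x ∘ σ) = ((Equiv.Perm.sign σ : ℤ) : ℝ) * f x)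
    (hInt : ∀ z : Fin (n + 1) → X, Integrable (fun t => f (Fin.cons t z)) μ) :
    -- simplified form of the boundary operator
    (∀ z : Fin (n + 1) → X,
      boundary0 μ (n + 1) f z = (n + 2 : ℝ) * ∫ t, f (Fin.cons t z) ∂μ) ∧
    -- formula for the Laplacian `Δ f = ∂(δ f) + δ(∂ f)`
    (∀ x : Fin (n + 2) → X,
      boundary0 μ (n + 2) (coboundary1 (n + 2) f) x +
          coboundary1 (n + 1) (boundary0 μ (n + 1) f) x =
        (n + 3 : ℝ) * f x -
          (1 / (n + 2 : ℝ)) * ∑ i : Fin (n + 2),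
            (-1 : ℝ) ^ (i : ℕ) * boundary0 μ (n + 1) f (x ∘ i.succAbove)) := by
  have hf : IsAlternating f := halt
  have hboundary (z : Fin (n + 1) → X) :
      boundary0 μ (n + 1) f z = (n + 2 : ℝ) * ∫ t, f (Fin.cons t z) ∂μ := by
    rw [hf.boundary0_eq]
    push_cast
    ring
  refine ⟨hboundary, fun x => ?_⟩
  set T := ∑ k : Fin (n + 2), (-1) ^ (k : ℕ) * ∫ t, f (Fin.cons t (x ∘ k.succAbove)) ∂μ
  have hsum : ∑ i : Fin (n + 2), (-1 : ℝ) ^ (i : ℕ) * boundary0 μ (n + 1) f (x ∘ i.succAbove) =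
      (n + 2) * T := by
    simp only [hboundary, Finset.mul_sum, T]
    exact Finset.sum_congr rfl fun _ _ => by ring
  rw [hf.boundary0_coboundary1 μ hInt, coboundary1, hsum]
  push_cast
  field_simp
  ring

/-- for an alternating `f ∈ L²_a(X^{ℓ+1})` (here `ℓ = n+1`) and
`K ≡ 1`, the boundary operator takes the simplified form
`∂f(x₀,…,x_{ℓ-1}) = (ℓ+1) ∫_X f(t,x₀,…,x_{ℓ-1}) dμ(t)`, and the Laplacian
`Δ = ∂δ + δ∂` satisfies
`Δf(x₀,…,x_ℓ) = (ℓ+2) f(x₀,…,x_ℓ) − (1/(ℓ+1)) Σᵢ (-1)ⁱ ∂f(x₀,…,x̂ᵢ,…,x_ℓ)`. -/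
theorem boundary_and_laplacian_on_alternating
    {X : Type*} [MeasurableSpace X] (μ : Measure X) [IsProbabilityMeasure μ]
    (n : ℕ) (f : (Fin (n + 2) → X) → ℝ)
    (halt : ∀ (σ : Equiv.Perm (Fin (n + 2))) (x : Fin (n + 2) → X),
      f (x ∘ σ) = ((Equiv.Perm.sign σ : ℤ) : ℝ) * f x)
    (hf : MemLp f 2 (Measure.pi fun _ : Fin (n + 2) => μ))
    (hInt : ∀ z : Fin (n + 1) → X, Integrable (fun t => f (Fin.cons t z)) μ) :
    -- simplified form of the boundary operator
    (∀ z : Fin (n + 1) → X,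
      boundary0 μ (n + 1) f z = (n + 2 : ℝ) * ∫ t, f (Fin.cons t z) ∂μ) ∧
    -- formula for the Laplacian `Δ f = ∂(δ f) + δ(∂ f)`
    (∀ x : Fin (n + 2) → X,
      boundary0 μ (n + 2) (coboundary1 (n + 2) f) x +
          coboundary1 (n + 1) (boundary0 μ (n + 1) f) x =
        (n + 3 : ℝ) * f x -
          (1 / (n + 2 : ℝ)) * ∑ i : Fin (n + 2),
            (-1 : ℝ) ^ (i : ℕ) * boundary0 μ (n + 1) f (x ∘ i.succAbove)) :=
  boundary_and_laplacian_on_alternating_general μ n f halt hInt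
end

section
/- Assume that for every measurable set A, the function x ↦ μ(S_{x,α} ∩ A) is continuous on X. If f ∈ L²(X) and Δ_α f = g is continuous, then f is continuous. -/
open MeasureTheory

/-- The slice `S_{x,α} = {t ∈ X : ∃ p, d(x,p) ≤ α ∧ d(t,p) ≤ α}`. -/
def alphaSlice {X : Type*} [MetricSpace X] (α : ℝ) (x : X) : Set X :=
  {t | ∃ p : X, dist x p ≤ α ∧ dist t p ≤ α}

/-- The `α`-scale Laplacian on `0`-forms:
`Δ_α f(x) = 2 μ(S_{x,α}) f(x) − 2 ∫_{S_{x,α}} f dμ`. -/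
noncomputable def lap0 {X : Type*} [MetricSpace X] [MeasurableSpace X]
    (μ : Measure X) (α : ℝ) (f : X → ℝ) (x : X) : ℝ :=
  2 * (μ (alphaSlice α x)).toReal * f x - 2 * ∫ t in alphaSlice α x, f t ∂μ

/-!
Solving `Δ_α f = g` for `f` gives `f(x) = (g(x) + 2 ∫_{S_x} f dμ) / (2 μ(S_x))`, and the
denominator never vanishes because `S_x` contains the open ball `B_α(x)`. So it suffices that
`x ↦ ∫_{S_x} f dμ` is continuous. This holds for simple functions, which are finite combinations
of indicators of measurable sets, and passes to every integrable `f` because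
`|∫_{S_x} f - ∫_{S_x} s| ≤ ‖f - s‖₁` uniformly in `x`, so that simple approximations of `f`
in `L¹` converge uniformly.
-/

section SetIntegralFamily

variable {X Y E : Type*} [TopologicalSpace X] [MeasurableSpace Y]
  [NormedAddCommGroup E] [NormedSpace ℝ E] (μ : Measure Y) {S : X → Set Y}

theorem continuous_setIntegral_simpleFunc [CompleteSpace E] [IsFiniteMeasure μ]
    (hS : ∀ A : Set Y, MeasurableSet A → Continuous fun x => μ.real (S x ∩ A))
    (s : SimpleFunc Y E) :
    Continuous fun x => ∫ t in S x, s t ∂μ := by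
  have hsum : (fun x => ∫ t in S x, s t ∂μ)
      = fun x => ∑ c ∈ s.range, μ.real (S x ∩ s ⁻¹' {c}) • c := by
    funext x
    rw [← SimpleFunc.integral_eq_integral _ s.integrable_of_isFiniteMeasure.integrableOn,
      SimpleFunc.integral_eq]
    simp only [measureReal_restrict_apply (s.measurableSet_preimage _), Set.inter_comm]
  rw [hsum]
  exact continuous_finsetSum _ fun c _ =>
    (hS _ (s.measurableSet_preimage _)).smul continuous_const

theorem dist_setIntegral_le_eLpNorm_sub {f g : Y → E} (hf : Integrable f μ)
    (hg : Integrable g μ) (s : Set Y) :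
    dist (∫ t in s, f t ∂μ) (∫ t in s, g t ∂μ) ≤ (eLpNorm (f - g) 1 μ).toReal := by
  have hfg : Integrable (f - g) μ := hf.sub hg
  rw [dist_eq_norm, ← integral_sub hf.integrableOn hg.integrableOn]
  calc ‖∫ t in s, (f - g) t ∂μ‖
      ≤ ∫ t in s, ‖(f - g) t‖ ∂μ := norm_integral_le_integral_norm _
    _ ≤ ∫ t, ‖(f - g) t‖ ∂μ :=
        integral_mono_measure Measure.restrict_le_self
          (Filter.Eventually.of_forall fun _ => norm_nonneg _) hfg.norm
    _ = (eLpNorm (f - g) 1 μ).toReal := by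
        rw [eLpNorm_one_eq_lintegral_enorm,
          integral_norm_eq_lintegral_enorm hfg.aestronglyMeasurable]

theorem continuous_setIntegral_of_integrable [CompleteSpace E] [IsFiniteMeasure μ]
    (hS : ∀ A : Set Y, MeasurableSet A → Continuous fun x => μ.real (S x ∩ A))
    {f : Y → E} (hf : Integrable f μ) :
    Continuous fun x => ∫ t in S x, f t ∂μ := by
  refine continuous_of_uniform_approx_of_continuous fun u hu => ?_
  obtain ⟨ε, hε, hεu⟩ := Metric.mem_uniformity_dist.1 hu
  obtain ⟨s, hs, -⟩ := (memLp_one_iff_integrable.2 hf).exists_simpleFunc_eLpNorm_sub_lt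
    ENNReal.one_ne_top (ENNReal.ofReal_pos.2 hε).ne'
  refine ⟨fun x => ∫ t in S x, s t ∂μ, continuous_setIntegral_simpleFunc μ hS s,
    fun x => hεu ?_⟩
  calc dist (∫ t in S x, f t ∂μ) (∫ t in S x, s t ∂μ)
      ≤ (eLpNorm (f - ⇑s) 1 μ).toReal :=
        dist_setIntegral_le_eLpNorm_sub μ hf s.integrable_of_isFiniteMeasure _
    _ < ε := ENNReal.toReal_lt_of_lt_ofReal hs

end SetIntegralFamily

section Slice

variable {X : Type*} [MetricSpace X] {α : ℝ}

theorem closedBall_subset_alphaSlice (hα : 0 ≤ α) (x : X) :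
    Metric.closedBall x α ⊆ alphaSlice α x :=
  fun _ ht => ⟨x, by simpa using hα, ht⟩

theorem measure_alphaSlice_pos [MeasurableSpace X] {μ : Measure X}
    (hμpos : ∀ U : Set X, IsOpen U → U.Nonempty → 0 < μ U) (hα : 0 < α) (x : X) :
    0 < μ (alphaSlice α x) :=
  (hμpos _ Metric.isOpen_ball ⟨x, Metric.mem_ball_self hα⟩).trans_le <| measure_mono <|
    Metric.ball_subset_closedBall.trans (closedBall_subset_alphaSlice hα.le x)

theorem eq_div_of_lap0_eq [MeasurableSpace X] {μ : Measure X} {f : X → ℝ} {x : X} {y : ℝ}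
    (hx : lap0 μ α f x = y) (hμx : (μ (alphaSlice α x)).toReal ≠ 0) :
    f x = (y + 2 * ∫ t in alphaSlice α x, f t ∂μ) / (2 * (μ (alphaSlice α x)).toReal) := by
  rw [eq_div_iff (mul_ne_zero two_ne_zero hμx), ← hx, lap0]
  ring

end Slice

theorem poisson_regularity_zero_forms_general
    {X : Type*} [MetricSpace X]
    [MeasurableSpace X]
    (μ : Measure X) [IsProbabilityMeasure μ]
    (hμpos : ∀ U : Set X, IsOpen U → U.Nonempty → 0 < μ U)
    (α : ℝ) (hα : 0 < α)
    (hcont : ∀ A : Set X, MeasurableSet A →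
      Continuous fun x => (μ (alphaSlice α x ∩ A)).toReal)
    (f g : X → ℝ) (hf : MemLp f 2 μ) (hg : Continuous g)
    (heq : ∀ x, lap0 μ α f x = g x) :
    Continuous f := by
  have hμS_pos : ∀ x, 0 < (μ (alphaSlice α x)).toReal := fun x =>
    ENNReal.toReal_pos (measure_alphaSlice_pos hμpos hα x).ne' (measure_ne_top μ _)
  have hμS : Continuous fun x => (μ (alphaSlice α x)).toReal := by
    simpa using hcont Set.univ MeasurableSet.univ
  have hint : Continuous fun x => ∫ t in alphaSlice α x, f t ∂μ :=
    continuous_setIntegral_of_integrable μ hcont (hf.integrable one_le_two)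
  have hf_eq : f = fun x => (g x + 2 * ∫ t in alphaSlice α x, f t ∂μ)
      / (2 * (μ (alphaSlice α x)).toReal) :=
    funext fun x => eq_div_of_lap0_eq (heq x) (hμS_pos x).ne'
  rw [hf_eq]
  exact (hg.add (continuous_const.mul hint)).div (continuous_const.mul hμS)
    fun x => mul_ne_zero two_ne_zero (hμS_pos x).ne'

/-- Poisson regularity in degree 0: if `x ↦ μ(S_{x,α} ∩ A)`
is continuous for every measurable set `A`, and `f ∈ L²(X)` satisfies
`Δ_α f = g` with `g` continuous, then `f` is continuous. -/
theorem poisson_regularity_zero_forms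
    {X : Type*} [MetricSpace X] [CompactSpace X]
    [MeasurableSpace X] [BorelSpace X]
    (μ : Measure X) [IsProbabilityMeasure μ]
    (hμpos : ∀ U : Set X, IsOpen U → U.Nonempty → 0 < μ U)
    (α : ℝ) (hα : 0 < α)
    (hcont : ∀ A : Set X, MeasurableSet A →
      Continuous fun x => (μ (alphaSlice α x ∩ A)).toReal)
    (f g : X → ℝ) (hf : MemLp f 2 μ) (hg : Continuous g)
    (heq : ∀ x, lap0 μ α f x = g x) :
    Continuous f :=
  poisson_regularity_zero_forms_general μ hμpos α hα hcont f g hf hg heq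
end

section
/- Let X be a compact metric space and α > 0. For σ ∈ U^{ℓ+1}_α define the witness set w_α(σ) = ∩ᵢ B̄_α(xᵢ). Suppose w_α : U^{ℓ+1}_α → K(X) is continuous (Hausdorff metric). Then for every ε > 0 there exists δ > 0 such that for all β ∈ [α, α+δ] and all σ ∈ U^{ℓ+1}_α, the Hausdorff distance D(w_α(σ), w_β(σ)) ≤ ε. -/
/-- The closed `α`-neighborhood of the diagonal in `X^n`:
`U^n_α = {x : ∃ t, d(xᵢ,t) ≤ α for all i}`. -/
def diagNbhd {X : Type*} [MetricSpace X] (α : ℝ) (n : ℕ) :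
    Set (Fin n → X) :=
  {x | ∃ t : X, ∀ i, dist (x i) t ≤ α}

/-- The witness set `w_β(σ) = ⋂ᵢ B̄_β(σᵢ)`. -/
def witnessSet {X : Type*} [MetricSpace X] (β : ℝ) {n : ℕ}
    (σ : Fin n → X) : Set X :=
  ⋂ i, Metric.closedBall (σ i) β

/-!
Put `h(σ, t) = max_i d(σᵢ, t)` and `g(σ, t) = d(t, w_α(σ))` on the compact set `U_α × X`,
so that `w_β(σ) = {t : h(σ, t) ≤ β}`. Continuity of `w_α` makes `g` continuous, and `g = 0`
where `h ≤ α`. Hence `max (h - α) (ε - g)` is a positive continuous function on a compact set,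
bounded below by some `2δ > 0`; then `h ≤ α + δ` forces `g < ε`, the nontrivial half of
`D(w_α(σ), w_β(σ)) ≤ ε` (the other half holds because `w_α(σ) ⊆ w_β(σ)`).
-/
open Metric Set

lemma IsCompact.exists_pos_forall_lt_of_le {Z : Type*} [TopologicalSpace Z] {K : Set Z}
    (hK : IsCompact K) {f g : Z → ℝ} (hf : ContinuousOn f K) (hg : ContinuousOn g K)
    {a b : ℝ} (h : ∀ p ∈ K, f p ≤ a → g p < b) :
    ∃ δ > 0, ∀ p ∈ K, f p ≤ a + δ → g p < b := by
  have hpos : ∀ p ∈ K, 0 < max (f p - a) (b - g p) := fun p hp => by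
    by_cases hfp : f p ≤ a
    · exact lt_max_of_lt_right (sub_pos.2 (h p hp hfp))
    · exact lt_max_of_lt_left (sub_pos.2 (not_le.1 hfp))
  obtain ⟨m, hm, hmin⟩ := hK.exists_forall_le' ((hf.sub continuousOn_const).sup
    (continuousOn_const.sub hg)) hpos
  refine ⟨m / 2, half_pos hm, fun p hp hfp => ?_⟩
  have hm_le : m ≤ max (f p - a) (b - g p) := hmin p hp
  by_contra! hgp
  have hlt : max (f p - a) (b - g p) < m := max_lt (by linarith) (by linarith)
  exact hlt.not_ge hm_le

lemma continuousOn_infDist_of_hausdorffDist {X Y : Type*} [PseudoMetricSpace X]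
    [PseudoMetricSpace Y] {A : Y → Set X} {s : Set Y}
    (hfin : ∀ y ∈ s, ∀ y' ∈ s, hausdorffEDist (A y) (A y') ≠ ⊤)
    (hcont : ∀ y ∈ s, ∀ ε > 0, ∃ δ > 0, ∀ y' ∈ s, dist y y' < δ →
      hausdorffDist (A y) (A y') < ε) :
    ContinuousOn (fun p : Y × X => infDist p.2 (A p.1)) (s ×ˢ univ) := by
  rintro ⟨y, x⟩ ⟨hy, -⟩
  rw [Metric.continuousWithinAt_iff]
  intro ε hε
  obtain ⟨δ, hδ, hclose⟩ := hcont y hy (ε / 2) (half_pos hε)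
  refine ⟨min δ (ε / 2), lt_min hδ (half_pos hε), ?_⟩
  rintro ⟨y', x'⟩ ⟨hy', -⟩ hd
  rw [Prod.dist_eq, lt_min_iff, max_lt_iff, max_lt_iff] at hd
  have hA : hausdorffDist (A y) (A y') < ε / 2 :=
    hclose y' hy' (by rw [dist_comm]; exact hd.1.1)
  have hx : dist x' x < ε / 2 := hd.2.2
  have h₁ := infDist_le_infDist_add_hausdorffDist (x := x') (hfin y hy y' hy')
  have h₂ := infDist_le_infDist_add_hausdorffDist (x := x) (hfin y' hy' y hy)
  have h₃ := infDist_le_infDist_add_dist (x := x') (y := x) (s := A y)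
  have h₄ := infDist_le_infDist_add_dist (x := x) (y := x') (s := A y')
  rw [hausdorffDist_comm] at h₂
  rw [dist_comm] at h₄
  rw [Real.dist_eq, abs_sub_lt_iff]
  constructor <;> linarith

section witnessSet

variable {X : Type*} [MetricSpace X] {n : ℕ}

lemma mem_witnessSet_iff [NeZero n] {β : ℝ} {σ : Fin n → X} {t : X} :
    t ∈ witnessSet β σ ↔ dist (fun _ => t) σ ≤ β := by
  simp [witnessSet, dist_pi_le_iff']

lemma witnessSet_mono {α β : ℝ} (h : α ≤ β) (σ : Fin n → X) :
    witnessSet α σ ⊆ witnessSet β σ :=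
  iInter_mono fun _ => closedBall_subset_closedBall h

lemma witnessSet_nonempty {α : ℝ} {σ : Fin n → X} (hσ : σ ∈ diagNbhd α n) :
    (witnessSet α σ).Nonempty := by
  obtain ⟨t, ht⟩ := hσ
  exact ⟨t, mem_iInter.2 fun i => by rw [mem_closedBall, dist_comm]; exact ht i⟩

lemma isCompact_diagNbhd [CompactSpace X] (α : ℝ) (n : ℕ) :
    IsCompact (diagNbhd (X := X) α n) := by
  have : diagNbhd (X := X) α n =
      Prod.fst '' ⋂ i, {p : (Fin n → X) × X | dist (p.1 i) p.2 ≤ α} := by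
    ext σ
    simp [diagNbhd]
  rw [this]
  exact (isClosed_iInter fun i => isClosed_le (by fun_prop) continuous_const).isCompact.image
    continuous_fst

end witnessSet

theorem witness_uniform_hausdorff_approx_general
    {X : Type*} [MetricSpace X] [CompactSpace X]
    (α : ℝ) (ℓ : ℕ)
    (hw_cont : ∀ σ ∈ diagNbhd (X := X) α (ℓ + 1), ∀ ε > (0 : ℝ), ∃ δ > (0 : ℝ),
      ∀ τ ∈ diagNbhd (X := X) α (ℓ + 1), (∀ i, dist (σ i) (τ i) < δ) →
        Metric.hausdorffDist (witnessSet α σ) (witnessSet α τ) < ε) :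
    ∀ ε > (0 : ℝ), ∃ δ > (0 : ℝ), ∀ β : ℝ, α ≤ β → β ≤ α + δ →
      ∀ σ ∈ diagNbhd (X := X) α (ℓ + 1),
        Metric.hausdorffDist (witnessSet α σ) (witnessSet β σ) ≤ ε := by
  intro ε hε
  have hg : ContinuousOn (fun p : (Fin (ℓ + 1) → X) × X => infDist p.2 (witnessSet α p.1))
      (diagNbhd α (ℓ + 1) ×ˢ univ) :=
    continuousOn_infDist_of_hausdorffDist
      (fun σ hσ τ hτ => hausdorffEDist_ne_top_of_nonempty_of_bounded (witnessSet_nonempty hσ)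
        (witnessSet_nonempty hτ) isBounded_of_compactSpace isBounded_of_compactSpace)
      (fun σ hσ ε hε => (hw_cont σ hσ ε hε).imp fun δ ⟨hδ, hclose⟩ =>
        ⟨hδ, fun τ hτ hστ => hclose τ hτ ((dist_pi_lt_iff hδ).1 hστ)⟩)
  have hK : IsCompact (diagNbhd (X := X) α (ℓ + 1) ×ˢ (univ : Set X)) :=
    (isCompact_diagNbhd α _).prod isCompact_univ
  obtain ⟨δ, hδ, hnear⟩ := hK.exists_pos_forall_lt_of_le
    (f := fun p => dist (fun _ => p.2) p.1) (by fun_prop) hg (a := α) (b := ε) fun p _ hp => by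
      rwa [infDist_zero_of_mem (mem_witnessSet_iff.2 hp)]
  refine ⟨δ, hδ, fun β hαβ hβ σ hσ => hausdorffDist_le_of_infDist hε.le (fun t ht => ?_)
    (fun t ht => ?_)⟩
  · rw [infDist_zero_of_mem (witnessSet_mono hαβ σ ht)]
    exact hε.le
  · exact (hnear (σ, t) ⟨hσ, trivial⟩ ((mem_witnessSet_iff.1 ht).trans hβ)).le

/-- if `w_α : U^{ℓ+1}_α → K(X)` is continuous (for the Hausdorff
metric), then for every `ε > 0` there is `δ > 0` such that for all
`β ∈ [α, α+δ]` and all `σ ∈ U^{ℓ+1}_α`, `D(w_α(σ), w_β(σ)) ≤ ε`. -/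
theorem witness_uniform_hausdorff_approx
    {X : Type*} [MetricSpace X] [CompactSpace X]
    (α : ℝ) (hα : 0 < α) (ℓ : ℕ)
    (hw_cont : ∀ σ ∈ diagNbhd (X := X) α (ℓ + 1), ∀ ε > (0 : ℝ), ∃ δ > (0 : ℝ),
      ∀ τ ∈ diagNbhd (X := X) α (ℓ + 1), (∀ i, dist (σ i) (τ i) < δ) →
        Metric.hausdorffDist (witnessSet α σ) (witnessSet α τ) < ε) :
    ∀ ε > (0 : ℝ), ∃ δ > (0 : ℝ), ∀ β : ℝ, α ≤ β → β ≤ α + δ →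
      ∀ σ ∈ diagNbhd (X := X) α (ℓ + 1),
        Metric.hausdorffDist (witnessSet α σ) (witnessSet β σ) ≤ ε :=
  witness_uniform_hausdorff_approx_general α ℓ hw_cont
end
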